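/- arXiv:1810.08416 — 3 statements merged into one kernel-verified Lean document; each statement's English description precedes it below -/
import Mathlib

section
/- Let $r \geq 4$ be even and let $\varphi_3$ be the collection of transversals $Z$ of the pairs $\{x_i,y_i\}$, $1\leq i\leq r$, with $|Z \cap \{y_1,\dots,y_r\}|$ odd. Then for any two members $C_1, C_2 \in \varphi_3$, the intersection $C_1 \cap C_2$ has even cardinality. -/
/-!
Since the `xᵢ, yᵢ` are distinct, a member of `φ₃` is determined by the set `S` of indices `i`
at which it takes `yᵢ`, and `|S|` is odd. Two members with index sets `S₁, S₂` agree exactly at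
the indices in `S₁ ∩ S₂` or outside `S₁ ∪ S₂`, so they share
`|S₁ ∩ S₂| + r - |S₁ ∪ S₂| = r + |S₁| + |S₂| - 2 |S₁ ∪ S₂|` elements, which is even when `r` is.
-/

def groundE {α : Type*} [DecidableEq α] (r : ℕ) (x y : Fin r → α) (t : α) : Finset α :=
  (Finset.univ.image x) ∪ (Finset.univ.image y) ∪ {t}

/-- φ₃: transversals of the pairs {xᵢ,yᵢ} (one element from each pair, so r elements,
not containing t) that contain an odd number of the yᵢ. -/
def phi3 {α : Type*} [DecidableEq α] (r : ℕ) (x y : Fin r → α) (t : α) : Set (Finset α) :=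
  {Z | Z ⊆ groundE r x y t ∧ Z.card = r ∧
    Odd ((Z ∩ Finset.univ.image y).card) ∧
    ∀ i : Fin r, (Z ∩ {x i, y i}).card = 1}

open Finset

lemma Finset.disjSum_inter_disjSum {β γ : Type*} [DecidableEq β] [DecidableEq γ]
    (s₁ s₂ : Finset β) (t₁ t₂ : Finset γ) :
    s₁.disjSum t₁ ∩ s₂.disjSum t₂ = (s₁ ∩ s₂).disjSum (t₁ ∩ t₂) := by
  ext (b | c) <;> simp

lemma Finset.even_card_compl_inter_compl_add_card_inter_iff {ι : Type*} [Fintype ι]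
    [DecidableEq ι] (s₁ s₂ : Finset ι) :
    Even (#(s₁ᶜ ∩ s₂ᶜ) + #(s₁ ∩ s₂)) ↔ Even (Fintype.card ι + #s₁ + #s₂) := by
  have hcompl := card_compl_add_card (s₁ ∪ s₂)
  have hunion := card_union_add_card_inter s₁ s₂
  rw [compl_union] at hcompl
  simp only [Nat.even_iff]
  omega

section PairTransversal

variable {ι α : Type*} [Fintype ι] [DecidableEq ι] [DecidableEq α] {x y : ι → α}

def pairTransversal (x y : ι → α) (S : Finset ι) : Finset α :=
  (Sᶜ.disjSum S).image (Sum.elim x y)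

lemma image_right_eq_pairTransversal_univ : univ.image y = pairTransversal x y univ := by
  ext a
  simp [pairTransversal]

lemma card_pairTransversal (hxy : Function.Injective (Sum.elim x y)) (S : Finset ι) :
    #(pairTransversal x y S) = Fintype.card ι := by
  rw [pairTransversal, card_image_of_injective _ hxy, card_disjSum, card_compl_add_card]

lemma card_pairTransversal_inter (hxy : Function.Injective (Sum.elim x y)) (S₁ S₂ : Finset ι) :
    #(pairTransversal x y S₁ ∩ pairTransversal x y S₂) = #(S₁ᶜ ∩ S₂ᶜ) + #(S₁ ∩ S₂) := by
  rw [pairTransversal, pairTransversal, ← image_inter _ _ hxy, disjSum_inter_disjSum,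
    card_image_of_injective _ hxy, card_disjSum]

lemma card_pairTransversal_inter_image_right (hxy : Function.Injective (Sum.elim x y))
    (S : Finset ι) : #(pairTransversal x y S ∩ univ.image y) = #S := by
  rw [image_right_eq_pairTransversal_univ, card_pairTransversal_inter hxy]
  simp

end PairTransversal

lemma exists_eq_pairTransversal_of_mem_phi3 {α : Type*} [DecidableEq α] {r : ℕ}
    {x y : Fin r → α} {t : α} (hxy : Function.Injective (Sum.elim x y)) {Z : Finset α}
    (hZ : Z ∈ phi3 r x y t) : ∃ S : Finset (Fin r), Z = pairTransversal x y S := by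
  obtain ⟨-, hcard, -, hpair⟩ := hZ
  have hx_mem (i : Fin r) (hy : y i ∉ Z) : x i ∈ Z := by
    obtain ⟨a, ha⟩ := card_pos.mp (hpair i).ge
    simp only [mem_inter, mem_insert, mem_singleton] at ha
    obtain ⟨haZ, rfl | rfl⟩ := ha
    exacts [haZ, absurd haZ hy]
  refine ⟨univ.filter (y · ∈ Z), (eq_of_subset_of_card_le ?_ ?_).symm⟩
  · intro a ha
    simp only [pairTransversal, mem_image, mem_disjSum, mem_compl, mem_filter, mem_univ,
      true_and] at ha
    obtain ⟨_, ⟨i, hi, rfl⟩ | ⟨i, hi, rfl⟩, rfl⟩ := ha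
    exacts [hx_mem i hi, hi]
  · rw [card_pairTransversal hxy, hcard, Fintype.card_fin]

theorem stmt_3_general {α : Type*} [DecidableEq α] (r : ℕ) (heven : Even r)
    (x y : Fin r → α) (t : α)
    (hinj : Function.Injective (Sum.elim x (Sum.elim y (fun _ : Unit => t))))
    (C₁ C₂ : Finset α) (h₁ : C₁ ∈ phi3 r x y t) (h₂ : C₂ ∈ phi3 r x y t) :
    Even ((C₁ ∩ C₂).card) := by
  have hxy : Function.Injective (Sum.elim x y) := by
    simpa [Sum.elim_comp_map] using hinj.comp (Sum.map_injective.mpr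
      ⟨Function.injective_id, Sum.inl_injective⟩)
  obtain ⟨S₁, rfl⟩ := exists_eq_pairTransversal_of_mem_phi3 hxy h₁
  obtain ⟨S₂, rfl⟩ := exists_eq_pairTransversal_of_mem_phi3 hxy h₂
  have hodd₁ := h₁.2.2.1
  have hodd₂ := h₂.2.2.1
  rw [card_pairTransversal_inter_image_right hxy] at hodd₁ hodd₂
  rw [card_pairTransversal_inter hxy, even_card_compl_inter_compl_add_card_inter_iff,
    Fintype.card_fin]
  exact (heven.add_odd hodd₁).add_odd hodd₂

theorem stmt_3 {α : Type*} [DecidableEq α] (r : ℕ) (hr : 4 ≤ r) (heven : Even r)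
    (x y : Fin r → α) (t : α)
    (hinj : Function.Injective (Sum.elim x (Sum.elim y (fun _ : Unit => t))))
    (C₁ C₂ : Finset α) (h₁ : C₁ ∈ phi3 r x y t) (h₂ : C₂ ∈ phi3 r x y t) :
    Even ((C₁ ∩ C₂).card) :=
  stmt_3_general r heven x y t hinj C₁ C₂ h₁ h₂
end

section
/- Let $r \geq 3$. The rank-$r$ binary spike $Z_r$, represented over $GF(2)$ by the $r \times (2r+1)$ matrix $[I_r \mid J_r - I_r \mid \mathbf{1}]$ (columns labeled $x_1,\dots,x_r,y_1,\dots,y_r,t$, where $J_r$ is the all-ones matrix), has exactly $2^r + \frac{r(r+1)}{2}$ circuits. -/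
/-! Over GF(2) a set of columns is dependent iff it has a nonempty subset with zero sum, so the
circuits are the minimal nonempty zero-sum sets. For `S = {xᵢ | i ∈ A} ∪ {yᵢ | i ∈ B}` (plus
possibly `t`), coordinate `j` of the sum of `S` is `[j ∈ A] + [j ∈ B] + |S ∩ {y₁, …, y_r, t}|`.
Hence the zero-sum sets are those with `A = B` and `t ∈ S ↔ |A|` odd, and those with `A = Bᶜ`
and `t ∈ S ↔ |B|` even. Each of the latter `2 ^ r` sets is a circuit: its nonempty zero-sum
subsets are of the same kind, with the same `B`. A set of the first kind contains the one built
on any pair inside `A`, and contains one of the second kind only if `A` is everything; so for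
`r ≥ 3` it is a circuit iff `|A| ∈ {1, 2}`, giving `r + C(r, 2)` more circuits. -/

/-- Index type for the columns of the binary spike matrix: `inl i ↦ xᵢ`,
`inr (inl i) ↦ yᵢ`, `inr (inr ()) ↦ t`. -/
abbrev SpikeIdx (r : ℕ) := Fin r ⊕ Fin r ⊕ Unit

/-- Columns of the matrix `[I_r | J_r - I_r | 1]` over GF(2). -/
def spikeCol (r : ℕ) : SpikeIdx r → (Fin r → ZMod 2)
  | Sum.inl i => fun j => if j = i then 1 else 0
  | Sum.inr (Sum.inl i) => fun j => if j = i then 0 else 1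
  | Sum.inr (Sum.inr _) => fun _ => 1

/-- A set of columns is dependent if the columns are not linearly independent. -/
def SpikeDep (r : ℕ) (S : Finset (SpikeIdx r)) : Prop :=
  ¬ LinearIndependent (ZMod 2) (fun i : {a // a ∈ S} => spikeCol r i.1)

/-- A circuit of the vector matroid `Z_r`: a minimal dependent set of columns. -/
def SpikeCircuit (r : ℕ) (S : Finset (SpikeIdx r)) : Prop :=
  SpikeDep r S ∧ ∀ T ⊂ S, ¬ SpikeDep r T

open Finset

section BinaryFamily

variable {ι V : Type*} [AddCommGroup V] [Module (ZMod 2) V]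

def NonemptyZeroSum (v : ι → V) (s : Finset ι) : Prop :=
  s.Nonempty ∧ ∑ i ∈ s, v i = 0

theorem not_linearIndepOn_iff_exists_nonemptyZeroSum {v : ι → V} {s : Finset ι} :
    ¬ LinearIndepOn (ZMod 2) v s ↔ ∃ t ⊆ s, NonemptyZeroSum v t := by
  classical
  have one_of_ne_zero : ∀ a : ZMod 2, a ≠ 0 → a = 1 := by decide
  rw [not_linearIndepOn_finset_iff]
  constructor
  · rintro ⟨f, hf, i, hi, hfi⟩
    refine ⟨s.filter (f · ≠ 0), filter_subset _ _, ⟨i, mem_filter.2 ⟨hi, hfi⟩⟩, ?_⟩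
    calc ∑ i ∈ s.filter (f · ≠ 0), v i = ∑ i ∈ s.filter (f · ≠ 0), f i • v i :=
          sum_congr rfl fun i hi => by rw [one_of_ne_zero _ (mem_filter.1 hi).2, one_smul]
      _ = ∑ i ∈ s, f i • v i := sum_filter_of_ne fun i _ h hfi => h (by rw [hfi, zero_smul])
      _ = 0 := hf
  · rintro ⟨t, hts, ⟨i, hi⟩, ht⟩
    refine ⟨fun j => if j ∈ t then 1 else 0, ?_, i, hts hi, by simp [hi]⟩
    simp [ite_smul, sum_ite_mem, inter_eq_right.2 hts, ht]

theorem minimal_not_linearIndepOn_iff {v : ι → V} {s : Finset ι} :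
    Minimal (fun t : Finset ι => ¬ LinearIndepOn (ZMod 2) v t) s ↔
      Minimal (NonemptyZeroSum v) s :=
  minimal_iff_minimal_of_imp_of_forall
    (fun t ht => not_linearIndepOn_iff_exists_nonemptyZeroSum.2 ⟨t, subset_rfl, ht⟩)
    (fun _ ht => not_linearIndepOn_iff_exists_nonemptyZeroSum.1 ht)

end BinaryFamily

section Spike

variable {r : ℕ} {A A' B B' : Finset (Fin r)} {t t' : Bool}

theorem spikeCircuit_iff_minimal {S : Finset (SpikeIdx r)} :
    SpikeCircuit r S ↔ Minimal (NonemptyZeroSum (spikeCol r)) S :=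
  (minimal_iff_forall_lt (P := fun T : Finset (SpikeIdx r) =>
    ¬ LinearIndepOn (ZMod 2) (spikeCol r) T)).symm.trans minimal_not_linearIndepOn_iff

theorem spikeCol_inr_inl_apply (i j : Fin r) :
    spikeCol r (Sum.inr (Sum.inl i)) j = (if j = i then 1 else 0) + 1 := by
  simp only [spikeCol]
  split_ifs <;> decide

def spikeSet (A B : Finset (Fin r)) (t : Bool) : Finset (SpikeIdx r) :=
  A.disjSum (B.disjSum (if t then univ else ∅))

@[simp]
theorem inl_mem_spikeSet {i : Fin r} : Sum.inl i ∈ spikeSet A B t ↔ i ∈ A := by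
  simp [spikeSet]

@[simp]
theorem inr_inl_mem_spikeSet {i : Fin r} : Sum.inr (Sum.inl i) ∈ spikeSet A B t ↔ i ∈ B := by
  simp [spikeSet]

@[simp]
theorem inr_inr_mem_spikeSet {u : Unit} : Sum.inr (Sum.inr u) ∈ spikeSet A B t ↔ t = true := by
  cases t <;> simp [spikeSet]

theorem exists_eq_spikeSet (S : Finset (SpikeIdx r)) : ∃ A B t, S = spikeSet A B t :=
  ⟨S.toLeft, S.toRight.toLeft, decide (Sum.inr (Sum.inr ()) ∈ S), by
    ext (i | i | u) <;> simp⟩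

theorem spikeSet_subset_spikeSet :
    spikeSet A B t ⊆ spikeSet A' B' t' ↔ A ⊆ A' ∧ B ⊆ B' ∧ (t → t') := by
  cases t <;> cases t' <;> simp [spikeSet, subset_iff]

theorem spikeSet_inj : spikeSet A B t = spikeSet A' B' t' ↔ A = A' ∧ B = B' ∧ t = t' := by
  refine ⟨fun h => ?_, by rintro ⟨rfl, rfl, rfl⟩; rfl⟩
  obtain ⟨hA, hB, ht⟩ := spikeSet_subset_spikeSet.1 h.le
  obtain ⟨hA', hB', ht'⟩ := spikeSet_subset_spikeSet.1 h.ge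
  exact ⟨hA.antisymm hA', hB.antisymm hB', Bool.eq_iff_iff.2 ⟨ht, ht'⟩⟩

theorem sum_spikeCol_spikeSet_apply (j : Fin r) :
    (∑ x ∈ spikeSet A B t, spikeCol r x) j =
      (if j ∈ A then 1 else 0) + (if j ∈ B then 1 else 0) + ((#B + t.toNat : ℕ) : ZMod 2) := by
  rw [Finset.sum_apply]
  simp only [spikeSet, sum_disjSum, spikeCol_inr_inl_apply, sum_add_distrib]
  cases t <;> simp [spikeCol] <;> ring

theorem sum_spikeCol_spikeSet_eq_zero_iff :
    ∑ x ∈ spikeSet A B t, spikeCol r x = 0 ↔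
      (A = B ∧ t = decide (Odd #B)) ∨ (A = Bᶜ ∧ t = decide (Even #B)) := by
  have coord (p q : Prop) [Decidable p] [Decidable q] (c : ZMod 2) :
      (if p then 1 else 0) + (if q then 1 else 0) + c = 0 ↔ (p ↔ (q ↔ c = 0)) := by
    by_cases hp : p <;> by_cases hq : q <;> simp only [hp, hq, if_true, if_false] <;>
      revert c <;> decide
  have even_iff : Even (#B + t.toNat) ↔ t = decide (Odd #B) := by
    cases t <;> simp [Nat.even_add_one]
  have odd_iff : Odd (#B + t.toNat) ↔ t = decide (Even #B) := by
    cases t <;> simp [Nat.odd_add_one]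
  rw [← even_iff, ← odd_iff, ← ZMod.natCast_eq_zero_iff_even, ← ZMod.natCast_eq_one_iff_odd]
  simp only [funext_iff, sum_spikeCol_spikeSet_apply, Pi.zero_apply, coord]
  generalize ((#B + t.toNat : ℕ) : ZMod 2) = c
  rcases (by decide : ∀ c : ZMod 2, c = 0 ∨ c = 1) c with rfl | rfl <;> simp [Finset.ext_iff]

-- The cycles of `Z_r` meeting `{y₁, …, y_r, t}` in an even, resp. odd, number of elements.
def evenCycle (A : Finset (Fin r)) : Finset (SpikeIdx r) :=
  spikeSet A A (decide (Odd #A))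

def oddCycle (B : Finset (Fin r)) : Finset (SpikeIdx r) :=
  spikeSet Bᶜ B (decide (Even #B))

theorem sum_spikeCol_eq_zero_iff (S : Finset (SpikeIdx r)) :
    ∑ x ∈ S, spikeCol r x = 0 ↔ (∃ A, S = evenCycle A) ∨ ∃ B, S = oddCycle B := by
  obtain ⟨A, B, t, rfl⟩ := exists_eq_spikeSet S
  simp only [sum_spikeCol_spikeSet_eq_zero_iff, evenCycle, oddCycle, spikeSet_inj]
  constructor
  · rintro (⟨rfl, rfl⟩ | ⟨rfl, rfl⟩)
    · exact Or.inl ⟨A, rfl, rfl, rfl⟩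
    · exact Or.inr ⟨B, rfl, rfl, rfl⟩
  · rintro (⟨A, rfl, rfl, rfl⟩ | ⟨B, rfl, rfl, rfl⟩)
    · exact Or.inl ⟨rfl, rfl⟩
    · exact Or.inr ⟨rfl, rfl⟩

theorem evenCycle_injective : Function.Injective (evenCycle (r := r)) :=
  fun _ _ h => (spikeSet_inj.1 h).1

theorem oddCycle_injective : Function.Injective (oddCycle (r := r)) :=
  fun _ _ h => (spikeSet_inj.1 h).2.1

theorem evenCycle_nonempty : (evenCycle A).Nonempty ↔ A.Nonempty := by
  constructor
  · rintro ⟨(i | i | u), hx⟩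
    · exact ⟨i, by simpa [evenCycle] using hx⟩
    · exact ⟨i, by simpa [evenCycle] using hx⟩
    · obtain ⟨n, hn⟩ : Odd #A := by simpa [evenCycle] using hx
      exact card_pos.1 (by omega)
  · rintro ⟨i, hi⟩
    exact ⟨Sum.inl i, by simpa [evenCycle] using hi⟩

theorem oddCycle_nonempty [NeZero r] : (oddCycle B).Nonempty := by
  by_cases h : 0 ∈ B
  · exact ⟨Sum.inr (Sum.inl 0), by simpa [oddCycle] using h⟩
  · exact ⟨Sum.inl 0, by simpa [oddCycle] using h⟩

theorem evenCycle_ne_oddCycle [NeZero r] : evenCycle A ≠ oddCycle B := by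
  intro h
  obtain ⟨hAB, rfl, -⟩ := spikeSet_inj.1 h
  simpa using congrArg (0 ∈ ·) hAB

theorem evenCycle_subset_evenCycle :
    evenCycle A ⊆ evenCycle A' ↔ A ⊆ A' ∧ (Odd #A → Odd #A') := by
  simp [evenCycle, spikeSet_subset_spikeSet]

theorem eq_empty_of_evenCycle_subset_oddCycle (h : evenCycle A ⊆ oddCycle B) : A = ∅ := by
  obtain ⟨hAc, hA, -⟩ := spikeSet_subset_spikeSet.1 h
  exact subset_empty.1 (inter_compl B ▸ subset_inter hA hAc)

theorem eq_univ_of_oddCycle_subset_evenCycle (h : oddCycle B ⊆ evenCycle A) : A = univ := by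
  obtain ⟨hBc, hB, -⟩ := spikeSet_subset_spikeSet.1 h
  exact univ_subset_iff.1 (union_compl B ▸ union_subset hB hBc)

theorem eq_of_oddCycle_subset_oddCycle (h : oddCycle B ⊆ oddCycle B') : B = B' := by
  obtain ⟨hBc, hB, -⟩ := spikeSet_subset_spikeSet.1 h
  exact hB.antisymm (compl_subset_compl.1 hBc)

theorem minimal_oddCycle [NeZero r] :
    Minimal (NonemptyZeroSum (spikeCol r)) (oddCycle B) := by
  refine minimal_iff.2 ⟨⟨oddCycle_nonempty, (sum_spikeCol_eq_zero_iff _).2 (.inr ⟨B, rfl⟩)⟩, ?_⟩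
  rintro T ⟨hne, hT⟩ hle
  rcases (sum_spikeCol_eq_zero_iff T).1 hT with ⟨A, rfl⟩ | ⟨B', rfl⟩
  · have := evenCycle_nonempty.1 hne
    rw [eq_empty_of_evenCycle_subset_oddCycle hle] at this
    exact absurd this not_nonempty_empty
  · rw [eq_of_oddCycle_subset_oddCycle hle]

theorem minimal_evenCycle_iff (hr : 3 ≤ r) :
    Minimal (NonemptyZeroSum (spikeCol r)) (evenCycle A) ↔ #A = 1 ∨ #A = 2 := by
  constructor
  · intro h
    have hA := (evenCycle_nonempty.1 h.prop.1).card_pos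
    suffices #A ≤ 2 by omega
    by_contra! hA3
    obtain ⟨s, hsA, hs⟩ := exists_subset_card_eq (show 2 ≤ #A by omega)
    have hs_cycle : NonemptyZeroSum (spikeCol r) (evenCycle s) :=
      ⟨evenCycle_nonempty.2 (card_pos.1 (by omega)), (sum_spikeCol_eq_zero_iff _).2 (.inl ⟨s, rfl⟩)⟩
    have := h.eq_of_le hs_cycle (evenCycle_subset_evenCycle.2 ⟨hsA, by simp [hs]⟩)
    rw [evenCycle_injective this] at hs
    omega
  · intro hA
    refine minimal_iff.2 ⟨⟨evenCycle_nonempty.2 (card_pos.1 (by omega)),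
      (sum_spikeCol_eq_zero_iff _).2 (.inl ⟨A, rfl⟩)⟩, ?_⟩
    rintro T ⟨hne, hT⟩ hle
    rcases (sum_spikeCol_eq_zero_iff T).1 hT with ⟨A', rfl⟩ | ⟨B, rfl⟩
    · obtain ⟨hA'A, hodd⟩ := evenCycle_subset_evenCycle.1 hle
      have hA' := (evenCycle_nonempty.1 hne).card_pos
      have := card_le_card hA'A
      rw [eq_of_subset_of_card_le hA'A]
      rcases hA with hA | hA
      · omega
      · by_contra! h
        have : #A' = 1 := by omega
        simp [this, hA, Nat.odd_iff] at hodd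
    · have := congrArg card (eq_univ_of_oddCycle_subset_evenCycle hle)
      rw [card_univ, Fintype.card_fin] at this
      omega

theorem setOf_spikeCircuit (hr : 3 ≤ r) :
    {S | SpikeCircuit r S} = ↑((univ.powersetCard 1 ∪ univ.powersetCard 2).image evenCycle ∪
      univ.image oddCycle : Finset (Finset (SpikeIdx r))) := by
  have : NeZero r := ⟨by omega⟩
  ext S
  simp only [Set.mem_ofPred_eq, mem_coe, mem_union, mem_image, mem_powersetCard_univ, mem_univ,
    true_and, spikeCircuit_iff_minimal]
  constructor
  · intro h
    rcases (sum_spikeCol_eq_zero_iff S).1 h.prop.2 with ⟨A, rfl⟩ | ⟨B, rfl⟩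
    · exact .inl ⟨A, (minimal_evenCycle_iff hr).1 h, rfl⟩
    · exact .inr ⟨B, rfl⟩
  · rintro (⟨A, hA, rfl⟩ | ⟨B, rfl⟩)
    · exact (minimal_evenCycle_iff hr).2 hA
    · exact minimal_oddCycle

end Spike

theorem stmt_6 (r : ℕ) (hr : 3 ≤ r) :
    {S : Finset (SpikeIdx r) | SpikeCircuit r S}.ncard = 2 ^ r + r * (r + 1) / 2 := by
  have : NeZero r := ⟨by omega⟩
  have disjoint_cycles : Disjoint ((univ.powersetCard 1 ∪ univ.powersetCard 2).image evenCycle)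
      (univ.image (oddCycle (r := r))) := by
    simp only [disjoint_left, mem_image]
    rintro _ ⟨A, -, rfl⟩ ⟨B, -, h⟩
    exact evenCycle_ne_oddCycle h.symm
  rw [setOf_spikeCircuit hr, Set.ncard_coe_finset, card_union_of_disjoint disjoint_cycles,
    card_image_of_injective _ evenCycle_injective, card_image_of_injective _ oddCycle_injective,
    card_union_of_disjoint (univ.pairwise_disjoint_powersetCard (by decide)), card_powersetCard,
    card_powersetCard]
  simp only [card_univ, Fintype.card_finset, Fintype.card_fin]
  rw [← Nat.choose_succ_succ', Nat.choose_two_right, Nat.add_sub_cancel, mul_comm, add_comm]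
end

section
/- Let $r \geq 3$ be even, let $\varphi_3$ be the transversals of the pairs $\{x_i,y_i\}$, $1 \leq i \leq r$, with an odd number of $y_i$'s, and define $\varphi_4 = \{(E \setminus C) \triangle \{x_{r-1},y_{r-1}\} : C \in \varphi_3\}$ where $E = \{x_1,\dots,x_r,y_1,\dots,y_r,t\}$. Then the intersection of any two distinct members of $\varphi_4$ has odd cardinality. -/
/-! Put `Aᵢ = (E \ Cᵢ) ∆ P` with `P = {x_k, y_k}`. As `P` meets `Cᵢ` in one point, `|Aᵢ| = r + 1`,
and `A₁ ∆ A₂ = C₁ ∆ C₂ =: S`. Since `S` is a union of whole pairs, `|S| = 2|S ∩ Y|`, and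
`|S ∩ Y| = |(C₁ ∩ Y) ∆ (C₂ ∩ Y)|` is even because both `|Cᵢ ∩ Y|` are odd. Hence
`|A₁ ∩ A₂| = r + 1 - |S| / 2` is odd, `r` being even. -/

open Finset Function

namespace Finset

variable {α : Type*} [DecidableEq α]

theorem card_symmDiff_add_two_mul_card_inter (A B : Finset α) :
    #(symmDiff A B) + 2 * #(A ∩ B) = #A + #B := by
  have hdisj : Disjoint (symmDiff A B) (A ∩ B) := disjoint_symmDiff_inf A B
  rw [← card_union_add_card_inter, ← sup_eq_union, ← symmDiff_sup_inf A B, sup_eq_union,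
    inf_eq_inter, card_union_of_disjoint hdisj]
  ring

theorem even_card_symmDiff_of_odd {A B : Finset α} (hA : Odd #A) (hB : Odd #B) :
    Even #(symmDiff A B) := by
  have := card_symmDiff_add_two_mul_card_inter A B
  obtain ⟨a, ha⟩ := hA
  obtain ⟨b, hb⟩ := hB
  exact ⟨a + b + 1 - #(A ∩ B), by omega⟩

theorem mem_iff_notMem_of_card_inter_pair_eq_one {C : Finset α} {a b : α} (hab : a ≠ b)
    (h : #(C ∩ {a, b}) = 1) : a ∈ C ↔ b ∉ C := by
  by_cases ha : a ∈ C <;> by_cases hb : b ∈ C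
  · have : C ∩ {a, b} = {a, b} := inter_eq_right.mpr (insert_subset ha (by simpa))
    rw [this, card_pair hab] at h
    omega
  all_goals simp_all

theorem sdiff_inter_eq_sdiff_of_subset {E C P : Finset α} (hP : P ⊆ E) :
    (E \ C) ∩ P = P \ C := by
  ext a
  simp only [mem_inter, mem_sdiff]
  exact ⟨fun ⟨⟨_, haC⟩, haP⟩ => ⟨haP, haC⟩, fun ⟨haP, haC⟩ => ⟨⟨hP haP, haC⟩, haP⟩⟩

theorem card_sdiff_symmDiff_of_card_inter_eq_one {E C P : Finset α} (hC : C ⊆ E) (hP : P ⊆ E)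
    (h : #(C ∩ P) = 1) : #(symmDiff (E \ C) P) + #C + #P = #E + 2 := by
  have key := card_symmDiff_add_two_mul_card_inter (E \ C) P
  have hPC := card_sdiff_add_card_inter P C
  rw [sdiff_inter_eq_sdiff_of_subset hP, card_sdiff_of_subset hC] at key
  rw [inter_comm] at hPC
  have := card_le_card hC
  omega

theorem symmDiff_sdiff_symmDiff_sdiff {E C₁ C₂ : Finset α} (h₁ : C₁ ⊆ E) (h₂ : C₂ ⊆ E)
    (P : Finset α) : symmDiff (symmDiff (E \ C₁) P) (symmDiff (E \ C₂) P) = symmDiff C₁ C₂ := by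
  rw [symmDiff_symmDiff_symmDiff_comm, symmDiff_self, symmDiff_bot]
  ext a
  simp only [mem_symmDiff, mem_sdiff]
  have := @h₁ a
  have := @h₂ a
  tauto

theorem subset_biUnion_of_card_inter_eq_one {ι : Type*} [Fintype ι] {P : ι → Finset α}
    (hP : Pairwise (Disjoint on P)) {C : Finset α} (hC : #C = Fintype.card ι)
    (h : ∀ i, #(C ∩ P i) = 1) : C ⊆ univ.biUnion P := by
  have hcard : #(C ∩ univ.biUnion P) = #C := by
    rw [inter_biUnion, card_biUnion fun i _ j _ hij => (hP hij).mono inter_subset_right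
      inter_subset_right]
    simp [h, hC]
  exact inter_eq_left.mp (eq_of_subset_of_card_le inter_subset_left hcard.ge)

theorem card_inter_image_univ {ι : Type*} [Fintype ι] {f : ι → α} (hf : Injective f)
    (S : Finset α) : #(S ∩ univ.image f) = #{i | f i ∈ S} := by
  rw [inter_comm, ← filter_mem_eq_inter, filter_image, card_image_of_injective _ hf]

end Finset

section Transversal

variable {α : Type*} [DecidableEq α] {r : ℕ} {x y : Fin r → α}

def IsTransversal (x y : Fin r → α) (C : Finset α) : Prop :=
  #C = r ∧ ∀ i, #(C ∩ {x i, y i}) = 1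

theorem pairwise_disjoint_pair (hx : Injective x) (hy : Injective y) (hxy : ∀ i j, x i ≠ y j) :
    Pairwise (Disjoint on fun i => ({x i, y i} : Finset α)) := by
  intro i j hij
  simp only [onFun, disjoint_insert_left, disjoint_insert_right, disjoint_singleton,
    mem_insert, mem_singleton, not_or]
  exact ⟨⟨hx.ne hij.symm, hxy j i⟩, hxy i j, hy.ne hij⟩

theorem biUnion_pair_eq_image_union_image : univ.biUnion (fun i => ({x i, y i} : Finset α)) =
    univ.image x ∪ univ.image y := by
  ext a
  simp only [mem_biUnion, mem_univ, true_and, mem_insert, mem_singleton, mem_union, mem_image]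
  grind

theorem IsTransversal.subset_image_union (hx : Injective x) (hy : Injective y)
    (hxy : ∀ i j, x i ≠ y j) {C : Finset α} (hC : IsTransversal x y C) :
    C ⊆ univ.image x ∪ univ.image y := by
  rw [← biUnion_pair_eq_image_union_image]
  exact subset_biUnion_of_card_inter_eq_one (pairwise_disjoint_pair hx hy hxy)
    (by simpa using hC.1) hC.2

theorem IsTransversal.mem_symmDiff_iff (hxy : ∀ i j, x i ≠ y j) {C₁ C₂ : Finset α}
    (h₁ : IsTransversal x y C₁) (h₂ : IsTransversal x y C₂) (i : Fin r) :
    x i ∈ symmDiff C₁ C₂ ↔ y i ∈ symmDiff C₁ C₂ := by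
  have e₁ := mem_iff_notMem_of_card_inter_pair_eq_one (hxy i i) (h₁.2 i)
  have e₂ := mem_iff_notMem_of_card_inter_pair_eq_one (hxy i i) (h₂.2 i)
  simp only [mem_symmDiff]
  tauto

theorem IsTransversal.card_symmDiff (hx : Injective x) (hy : Injective y)
    (hxy : ∀ i j, x i ≠ y j) {C₁ C₂ : Finset α} (h₁ : IsTransversal x y C₁)
    (h₂ : IsTransversal x y C₂) :
    #(symmDiff C₁ C₂) = 2 * #(symmDiff C₁ C₂ ∩ univ.image y) := by
  set S := symmDiff C₁ C₂
  have hS : S ⊆ univ.image x ∪ univ.image y :=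
    symmDiff_le_sup.trans
      (union_subset (h₁.subset_image_union hx hy hxy) (h₂.subset_image_union hx hy hxy))
  have hXY : Disjoint (univ.image x) (univ.image y) := by
    simpa [disjoint_left] using fun i j h => hxy i j h.symm
  have hsplit : #S = #(S ∩ univ.image x) + #(S ∩ univ.image y) := by
    rw [← card_union_of_disjoint (hXY.mono inter_subset_right inter_subset_right),
      ← inter_union_distrib_left, inter_eq_left.mpr hS]
  have hxy_card : #(S ∩ univ.image x) = #(S ∩ univ.image y) := by
    rw [card_inter_image_univ hx, card_inter_image_univ hy]
    simp only [h₁.mem_symmDiff_iff hxy h₂, S]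
  omega

end Transversal

theorem groundE_eq_image {α : Type*} [DecidableEq α] (r : ℕ) (x y : Fin r → α) (t : α) :
    groundE r x y t = univ.image (Sum.elim x (Sum.elim y fun _ : Unit => t)) := by
  ext a
  simp only [groundE, mem_union, mem_image, mem_univ, true_and, mem_singleton, Sum.exists,
    Sum.elim_inl, Sum.elim_inr, exists_const]
  tauto

theorem card_groundE {α : Type*} [DecidableEq α] {r : ℕ} {x y : Fin r → α} {t : α}
    (hinj : Injective (Sum.elim x (Sum.elim y fun _ : Unit => t))) :
    #(groundE r x y t) = 2 * r + 1 := by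
  rw [groundE_eq_image, card_image_of_injective _ hinj]
  simp only [card_univ, Fintype.card_sum, Fintype.card_fin, Fintype.card_unit]
  ring

theorem stmt_16_general {α : Type*} [DecidableEq α] (r : ℕ) (heven : Even r)
    (x y : Fin r → α) (t : α)
    (hinj : Function.Injective (Sum.elim x (Sum.elim y (fun _ : Unit => t))))
    (C₁ C₂ : Finset α) (h₁ : C₁ ∈ phi3 r x y t) (h₂ : C₂ ∈ phi3 r x y t)
    (k : Fin r) :
    Odd (((symmDiff (groundE r x y t \ C₁) ({x k, y k} : Finset α)) ∩
          (symmDiff (groundE r x y t \ C₂) ({x k, y k} : Finset α))).card) := by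
  obtain ⟨hsub₁, hcard₁, hodd₁, hpair₁⟩ := h₁
  obtain ⟨hsub₂, hcard₂, hodd₂, hpair₂⟩ := h₂
  have hx : Injective x := hinj.comp Sum.inl_injective
  have hy : Injective y := (hinj.comp Sum.inr_injective).comp Sum.inl_injective
  have hxy : ∀ i j, x i ≠ y j := fun i j =>
    hinj.ne (a₁ := .inl i) (a₂ := .inr (.inl j)) Sum.inl_ne_inr
  have hP : {x k, y k} ⊆ groundE r x y t := by simp [groundE, insert_subset_iff]
  have hA := card_sdiff_symmDiff_of_card_inter_eq_one hsub₁ hP (hpair₁ k)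
  have hB := card_sdiff_symmDiff_of_card_inter_eq_one hsub₂ hP (hpair₂ k)
  have hS := IsTransversal.card_symmDiff hx hy hxy ⟨hcard₁, hpair₁⟩ ⟨hcard₂, hpair₂⟩
  have hSY : Even #(symmDiff C₁ C₂ ∩ univ.image y) := by
    rw [← inf_eq_inter, inf_symmDiff_distrib_right]
    exact even_card_symmDiff_of_odd hodd₁ hodd₂
  have key := card_symmDiff_add_two_mul_card_inter
    (symmDiff (groundE r x y t \ C₁) {x k, y k}) (symmDiff (groundE r x y t \ C₂) {x k, y k})
  rw [symmDiff_sdiff_symmDiff_sdiff hsub₁ hsub₂, hS] at key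
  rw [card_groundE hinj, card_pair (hxy k k)] at hA hB
  obtain ⟨m, hm⟩ := hSY
  obtain ⟨n, hn⟩ := heven
  rw [Nat.odd_iff]
  omega

theorem stmt_16 {α : Type*} [DecidableEq α] (r : ℕ) (hr : 3 ≤ r) (heven : Even r)
    (x y : Fin r → α) (t : α)
    (hinj : Function.Injective (Sum.elim x (Sum.elim y (fun _ : Unit => t))))
    (C₁ C₂ : Finset α) (h₁ : C₁ ∈ phi3 r x y t) (h₂ : C₂ ∈ phi3 r x y t)
    (k : Fin r) (hk : (k : ℕ) = r - 2)
    (hne : symmDiff (groundE r x y t \ C₁) ({x k, y k} : Finset α)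
         ≠ symmDiff (groundE r x y t \ C₂) ({x k, y k} : Finset α)) :
    Odd (((symmDiff (groundE r x y t \ C₁) ({x k, y k} : Finset α)) ∩
          (symmDiff (groundE r x y t \ C₂) ({x k, y k} : Finset α))).card) :=
  stmt_16_general r heven x y t hinj C₁ C₂ h₁ h₂ k
end
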